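/- For every n ≥ 1, the words α = (fa⁻¹)ⁿ(de⁻¹)ⁿ(ac⁻¹)^{n−1} and β = (fb⁻¹)ⁿ(de⁻¹)ⁿ(bc⁻¹)^{n−1} over X ∪ X⁻¹ (the Dicks–Leary generators of Stallings' group G_S) are geodesic words of length 3n−1 in (G_S,X): no strictly shorter word over X ∪ X⁻¹ represents the same element of G_S. -/

import Mathlib

/-! Stallings' group `G_S`: the kernel of the exponent-sum homomorphism
`φ : F(a,b) × F(c,d) × F(e,f) → ℤ`, with the 12-element Dicks–Leary generating
set `X = { y z⁻¹ : y ∈ {a,b}, z ∈ {c,d,e,f} } ∪ { y z⁻¹ : y ∈ {c,d}, z ∈ {e,f} }`. -/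

namespace Stallings

/-- A free group of rank 2. -/
abbrev F2 := FreeGroup (Fin 2)

/-- The ambient group `F = F(a,b) × F(c,d) × F(e,f)`. -/
abbrev F := F2 × F2 × F2

def a : F := (FreeGroup.of 0, 1, 1)
def b : F := (FreeGroup.of 1, 1, 1)
def c : F := (1, FreeGroup.of 0, 1)
def d : F := (1, FreeGroup.of 1, 1)
def e : F := (1, 1, FreeGroup.of 0)
def f : F := (1, 1, FreeGroup.of 1)

/-- The Dicks–Leary generating set
`X = { y z⁻¹ : y ∈ {a,b}, z ∈ {c,d,e,f} } ∪ { y z⁻¹ : y ∈ {c,d}, z ∈ {e,f} }`,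
viewed as a subset of `F` (each element lies in Stallings' group). -/
def Xs : Set F :=
  { a * c⁻¹, a * d⁻¹, a * e⁻¹, a * f⁻¹,
    b * c⁻¹, b * d⁻¹, b * e⁻¹, b * f⁻¹,
    c * e⁻¹, c * f⁻¹, d * e⁻¹, d * f⁻¹ }

/-- `w` is a word over `X ∪ X⁻¹`. -/
def IsWord (X : Set F) (w : List F) : Prop := ∀ x ∈ w, x ∈ X ∨ x⁻¹ ∈ X

end Stallings

/-! Project a word over `X ∪ X⁻¹` to the factors `F(c,d)` and `F(e,f)`. Every letter projects to
a single letter or to `1` in each factor, so the reduced words `dⁿc⁻⁽ⁿ⁻¹⁾` and `fⁿe⁻ⁿ` of the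
projections of `α` (or `β`) are subsequences of the projected letters. Hence the word splits as
`w₁w₂` with at least `n` letters projecting to `d` in `w₁` and `n - 1` projecting to `c⁻¹` in `w₂`,
and as `v₁v₂` with at least `n` letters projecting to `f` in `v₁` and `n` projecting to `e⁻¹`
in `v₂`. No letter of `X ∪ X⁻¹` projects both to `d` and to `f`, or both to `c⁻¹` and to `e⁻¹`;
comparing the two cut points then forces at least `3n - 1` letters. -/

open List

namespace List

variable {β γ : Type*}

theorem flatMap_eq_filterMap_head? {l : List β} {g : β → List γ}
    (hg : ∀ z ∈ l, (g z).length ≤ 1) : l.flatMap g = l.filterMap fun z => (g z).head? := by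
  rw [filterMap_eq_flatMap_toList]
  refine flatMap_congr fun z hz => ?_
  match g z, hg z hz with
  | [], _ => rfl
  | [_], _ => rfl

theorem le_countP_of_filterMap_eq_replicate [DecidableEq γ] {l w : List β}
    {f : β → Option γ} {x : γ} {k : ℕ} (hl : l.filterMap f = replicate k x) (hlw : l <+ w) :
    k ≤ w.countP fun z => f z = some x := by
  have hk := congrArg (count x) hl
  rw [count_filterMap, count_replicate_self] at hk
  calc k = l.countP fun z => f z == some x := hk.symm
    _ ≤ w.countP fun z => f z == some x := hlw.countP_le
    _ = w.countP fun z => f z = some x := countP_congr fun z _ => by simp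

theorem countP_add_countP_le_length {l : List β} {p q : β → Bool}
    (h : ∀ z ∈ l, p z → ¬ q z) : l.countP p + l.countP q ≤ l.length := by
  rw [length_eq_countP_add_countP p]
  exact Nat.add_le_add_left
    (countP_mono_left fun z hz hq => by simpa using fun hp => h z hz hp hq) _

/-- The segment between the two cut points is counted at most once; on the outer segments the
exclusive pairs `p₁, q₁` and `p₂, q₂` contribute disjointly. -/
theorem add_le_length_add_max_of_append_eq {w w₁ w₂ v₁ v₂ : List β} {p₁ p₂ q₁ q₂ : β → Bool}
    {k₁ k₂ m₁ m₂ : ℕ} (h₁ : ∀ z ∈ w, p₁ z → ¬ q₁ z) (h₂ : ∀ z ∈ w, p₂ z → ¬ q₂ z)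
    (hw : w = w₁ ++ w₂) (hk₁ : k₁ ≤ w₁.countP p₁) (hk₂ : k₂ ≤ w₂.countP p₂)
    (hv : w = v₁ ++ v₂) (hm₁ : m₁ ≤ v₁.countP q₁) (hm₂ : m₂ ≤ v₂.countP q₂) :
    k₁ + k₂ + m₁ + m₂ ≤ w.length + max k₁ k₂ := by
  subst hw
  rcases append_eq_append_iff.1 hv with ⟨s, rfl, rfl⟩ | ⟨s, rfl, rfl⟩
  · have hw₁ := countP_add_countP_le_length (l := w₁) fun z hz => h₁ z (by simp [hz])
    have hv₂ := countP_add_countP_le_length (l := v₂) fun z hz => h₂ z (by simp [hz])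
    have := countP_le_length (p := q₁) (l := s)
    have := countP_le_length (p := p₂) (l := s)
    simp only [countP_append, length_append] at *
    omega
  · have hv₁ := countP_add_countP_le_length (l := v₁) fun z hz => h₁ z (by simp [hz])
    have hw₂ := countP_add_countP_le_length (l := w₂) fun z hz => h₂ z (by simp [hz])
    have := countP_le_length (p := p₁) (l := s)
    have := countP_le_length (p := q₂) (l := s)
    simp only [countP_append, length_append] at *
    omega

end List

namespace FreeGroup

variable {α : Type*}

theorem isReduced_replicate_append_replicate {x y : α × Bool} (hxy : x.1 = y.1 → x.2 = y.2)
    (k m : ℕ) : IsReduced (replicate k x ++ replicate m y) := by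
  simp only [IsReduced, isChain_append]
  refine ⟨isChain_replicate_of_rel _ fun _ => rfl, isChain_replicate_of_rel _ fun _ => rfl, ?_⟩
  simp only [getLast?_replicate, head?_replicate]
  split_ifs <;> simp
  exact hxy

variable [DecidableEq α]

theorem toWord_of_pow_mul_inv_of_pow {i j : α} (hij : i ≠ j) (k m : ℕ) :
    (of i ^ k * (of j ^ m)⁻¹).toWord = replicate k (i, true) ++ replicate m (j, false) := by
  have hinv : invRev (replicate m (j, true)) = replicate m (j, false) := by simp [invRev]
  rw [toWord_mul, toWord_inv, toWord_of_pow, toWord_of_pow, hinv,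
    (isReduced_replicate_append_replicate (fun h => absurd h hij) k m).reduce_eq]

theorem toWord_list_prod_sublist (u : List (FreeGroup α)) :
    u.prod.toWord <+ u.flatMap toWord := by
  induction u with
  | nil => simp
  | cons g u ih => exact (toWord_mul_sublist g u.prod).trans (ih.append_left g.toWord)

theorem exists_append_eq_of_sublist_toWord_prod {β : Type*} {w : List β}
    {g : β → FreeGroup α} (hg : ∀ z ∈ w, (g z).toWord.length ≤ 1) {x y : α × Bool} {k m : ℕ}
    (h : replicate k x ++ replicate m y <+ (w.map g).prod.toWord) :
    ∃ w₁ w₂, w = w₁ ++ w₂ ∧ k ≤ w₁.countP (fun z => (g z).toWord.head? = some x) ∧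
      m ≤ w₂.countP (fun z => (g z).toWord.head? = some y) := by
  have hsub := h.trans (toWord_list_prod_sublist _)
  rw [flatMap_map, flatMap_eq_filterMap_head? hg, sublist_filterMap_iff] at hsub
  obtain ⟨l, hl, hlw⟩ := hsub
  obtain ⟨l₁, l₂, rfl, hl₁, hl₂⟩ := filterMap_eq_append_iff.1 hlw.symm
  obtain ⟨w₁, w₂, rfl, hw₁, hw₂⟩ := append_sublist_iff.1 hl
  exact ⟨w₁, w₂, rfl, le_countP_of_filterMap_eq_replicate hl₁ hw₁,
    le_countP_of_filterMap_eq_replicate hl₂ hw₂⟩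

end FreeGroup

namespace Stallings

open FreeGroup

/-- In `F(c,d)` the letters `(1, true)` and `(0, false)` are `d` and `c⁻¹`; in `F(e,f)` they are
`f` and `e⁻¹`. -/
theorem components_of_mem_Xs {x : F} (hx : x ∈ Xs ∨ x⁻¹ ∈ Xs) :
    x.2.1.toWord.length ≤ 1 ∧ x.2.2.toWord.length ≤ 1 ∧
      ¬(x.2.1.toWord.head? = some (1, true) ∧ x.2.2.toWord.head? = some (1, true)) ∧
      ¬(x.2.1.toWord.head? = some (0, false) ∧ x.2.2.toWord.head? = some (0, false)) := by
  simp only [Xs, Set.mem_insert_iff, Set.mem_singleton_iff, inv_eq_iff_eq_inv] at hx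
  rcases hx with (rfl|rfl|rfl|rfl|rfl|rfl|rfl|rfl|rfl|rfl|rfl|rfl) |
    (rfl|rfl|rfl|rfl|rfl|rfl|rfl|rfl|rfl|rfl|rfl|rfl) <;> decide

theorem three_mul_sub_one_le_length {n : ℕ} {w : List F} (hw : IsWord Xs w)
    (hmid : w.prod.2.1.toWord = replicate n (1, true) ++ replicate (n - 1) (0, false))
    (hright : w.prod.2.2.toWord = replicate n (1, true) ++ replicate n (0, false)) :
    3 * n - 1 ≤ w.length := by
  have hletter := fun x hx => components_of_mem_Xs (hw x hx)
  have hmid' : (w.map fun x => x.2.1).prod = w.prod.2.1 :=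
    (map_list_prod ((MonoidHom.fst _ _).comp (MonoidHom.snd _ _)) w).symm
  have hright' : (w.map fun x => x.2.2).prod = w.prod.2.2 :=
    (map_list_prod ((MonoidHom.snd _ _).comp (MonoidHom.snd _ _)) w).symm
  obtain ⟨w₁, w₂, hw₁₂, hd, hc⟩ := exists_append_eq_of_sublist_toWord_prod
    (k := n) (m := n - 1) (fun x hx => (hletter x hx).1) (by rw [hmid', hmid])
  obtain ⟨v₁, v₂, hv₁₂, hf, he⟩ := exists_append_eq_of_sublist_toWord_prod
    (k := n) (m := n) (fun x hx => (hletter x hx).2.1) (by rw [hright', hright])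
  have := add_le_length_add_max_of_append_eq (fun x hx => by simpa using (hletter x hx).2.2.1)
    (fun x hx => by simpa using (hletter x hx).2.2.2) hw₁₂ hd hc hv₁₂ hf he
  omega

/-- `α = alphaBetaWord a n` and `β = alphaBetaWord b n`. -/
def alphaBetaWord (y : F) (n : ℕ) : List F :=
  replicate n (f * y⁻¹) ++ replicate n (d * e⁻¹) ++ replicate (n - 1) (y * c⁻¹)

theorem length_alphaBetaWord (y : F) (n : ℕ) : (alphaBetaWord y n).length = 3 * n - 1 := by
  simp only [alphaBetaWord, length_append, length_replicate]
  omega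

theorem isWord_alphaBetaWord {y : F} (hy : y = a ∨ y = b) (n : ℕ) :
    IsWord Xs (alphaBetaWord y n) := by
  intro x hx
  simp only [alphaBetaWord, mem_append, mem_replicate] at hx
  rcases hy with rfl | rfl <;> rcases hx with (⟨-, rfl⟩ | ⟨-, rfl⟩) | ⟨-, rfl⟩ <;> simp [Xs]

theorem prod_alphaBetaWord_snd {y : F} (hy : y.2 = 1) (n : ℕ) :
    (alphaBetaWord y n).prod.2 = (of 1 ^ n * (of 0 ^ (n - 1))⁻¹, of 1 ^ n * (of 0 ^ n)⁻¹) := by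
  simp [alphaBetaWord, prod_append, prod_replicate, hy, c, d, e, f]

theorem le_length_of_prod_eq_alphaBetaWord {y : F} (hy : y.2 = 1) (n : ℕ) {w : List F}
    (hw : IsWord Xs w) (hprod : w.prod = (alphaBetaWord y n).prod) : 3 * n - 1 ≤ w.length := by
  have hsnd := prod_alphaBetaWord_snd hy n
  rw [← hprod] at hsnd
  exact three_mul_sub_one_le_length hw
    (by rw [hsnd, toWord_of_pow_mul_inv_of_pow (by decide)])
    (by rw [hsnd, toWord_of_pow_mul_inv_of_pow (by decide)])

theorem alpha_beta_geodesic_general (n : ℕ) :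
    (List.replicate n (f * a⁻¹) ++ List.replicate n (d * e⁻¹) ++
        List.replicate (n - 1) (a * c⁻¹)).length = 3 * n - 1 ∧
    (List.replicate n (f * b⁻¹) ++ List.replicate n (d * e⁻¹) ++
        List.replicate (n - 1) (b * c⁻¹)).length = 3 * n - 1 ∧
    IsWord Xs (List.replicate n (f * a⁻¹) ++ List.replicate n (d * e⁻¹) ++
        List.replicate (n - 1) (a * c⁻¹)) ∧
    IsWord Xs (List.replicate n (f * b⁻¹) ++ List.replicate n (d * e⁻¹) ++
        List.replicate (n - 1) (b * c⁻¹)) ∧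
    (∀ w : List F, IsWord Xs w →
      w.prod = (List.replicate n (f * a⁻¹) ++ List.replicate n (d * e⁻¹) ++
        List.replicate (n - 1) (a * c⁻¹)).prod → 3 * n - 1 ≤ w.length) ∧
    (∀ w : List F, IsWord Xs w →
      w.prod = (List.replicate n (f * b⁻¹) ++ List.replicate n (d * e⁻¹) ++
        List.replicate (n - 1) (b * c⁻¹)).prod → 3 * n - 1 ≤ w.length) := by
  have ha : a.2 = 1 := rfl
  have hb : b.2 = 1 := rfl
  exact ⟨length_alphaBetaWord a n, length_alphaBetaWord b n,
    isWord_alphaBetaWord (.inl rfl) n, isWord_alphaBetaWord (.inr rfl) n,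
    fun _ hw hprod => le_length_of_prod_eq_alphaBetaWord ha n hw hprod,
    fun _ hw hprod => le_length_of_prod_eq_alphaBetaWord hb n hw hprod⟩

/-- For every `n ≥ 1` the words `α = (fa⁻¹)ⁿ(de⁻¹)ⁿ(ac⁻¹)ⁿ⁻¹` and
`β = (fb⁻¹)ⁿ(de⁻¹)ⁿ(bc⁻¹)ⁿ⁻¹` over `X ∪ X⁻¹` are geodesic words of length `3n−1`
in `(G_S,X)`: no strictly shorter word over `X ∪ X⁻¹` represents the same element. -/
theorem alpha_beta_geodesic (n : ℕ) (hn : 1 ≤ n) :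
    (List.replicate n (f * a⁻¹) ++ List.replicate n (d * e⁻¹) ++
        List.replicate (n - 1) (a * c⁻¹)).length = 3 * n - 1 ∧
    (List.replicate n (f * b⁻¹) ++ List.replicate n (d * e⁻¹) ++
        List.replicate (n - 1) (b * c⁻¹)).length = 3 * n - 1 ∧
    IsWord Xs (List.replicate n (f * a⁻¹) ++ List.replicate n (d * e⁻¹) ++
        List.replicate (n - 1) (a * c⁻¹)) ∧
    IsWord Xs (List.replicate n (f * b⁻¹) ++ List.replicate n (d * e⁻¹) ++
        List.replicate (n - 1) (b * c⁻¹)) ∧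
    (∀ w : List F, IsWord Xs w →
      w.prod = (List.replicate n (f * a⁻¹) ++ List.replicate n (d * e⁻¹) ++
        List.replicate (n - 1) (a * c⁻¹)).prod → 3 * n - 1 ≤ w.length) ∧
    (∀ w : List F, IsWord Xs w →
      w.prod = (List.replicate n (f * b⁻¹) ++ List.replicate n (d * e⁻¹) ++
        List.replicate (n - 1) (b * c⁻¹)).prod → 3 * n - 1 ≤ w.length) :=
  alpha_beta_geodesic_general n

end Stallings
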